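/- arXiv:2404.16269 — 3 statements merged into one kernel-verified Lean document; each statement's English description precedes it below -/
import Mathlib

section
/- Let x** be an optimal trajectory for the sum-of-norm cost with positive weights, and suppose x**(k₀) = 0 for some k₀ ≤ Γ. Then Σ_{k=k₀}^{Γ} ω(k)‖x**(k)‖₂ = 0. -/
/- If `x**` is optimal for the sum-of-norm cost with positive weights and
`x**(k₀) = 0` for some `k₀ ≤ Γ`, then `∑_{k=k₀}^{Γ} ω(k)‖x**(k)‖₂ = 0`. -/
theorem sum_of_norm_tail_eq_zero {n m : ℕ} (Γ : ℕ)
    (f : EuclideanSpace ℝ (Fin n) × EuclideanSpace ℝ (Fin m) → EuclideanSpace ℝ (Fin n))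
    (hf : f (0, 0) = 0)
    (U : Set (EuclideanSpace ℝ (Fin m))) (hU0 : (0 : EuclideanSpace ℝ (Fin m)) ∈ U)
    (ω : ℕ → ℝ) (hω : ∀ k, 0 < ω k)
    (x₁ : EuclideanSpace ℝ (Fin n))
    (x : ℕ → EuclideanSpace ℝ (Fin n)) (u : ℕ → EuclideanSpace ℝ (Fin m))
    (hinit : x 1 = x₁)
    (hu : ∀ k, 1 ≤ k → k ≤ Γ - 1 → u k ∈ U)
    (hdyn : ∀ k, 1 ≤ k → x (k + 1) = f (x k, u k))
    (hopt : ∀ (y : ℕ → EuclideanSpace ℝ (Fin n)) (v : ℕ → EuclideanSpace ℝ (Fin m)),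
      y 1 = x₁ → (∀ k, 1 ≤ k → k ≤ Γ - 1 → v k ∈ U) →
      (∀ k, 1 ≤ k → y (k + 1) = f (y k, v k)) →
      ∑ k ∈ Finset.Icc 1 Γ, ω k * ‖x k‖ ≤ ∑ k ∈ Finset.Icc 1 Γ, ω k * ‖y k‖)
    (k₀ : ℕ) (hk₀1 : 1 ≤ k₀) (hk₀Γ : k₀ ≤ Γ) (hx0 : x k₀ = 0) :
    ∑ k ∈ Finset.Icc k₀ Γ, ω k * ‖x k‖ = 0 := by
  -- Modified trajectory: follow x until k₀, then stay at 0 with zero control.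
  set y : ℕ → EuclideanSpace ℝ (Fin n) := fun k => if k < k₀ then x k else 0 with hy
  set v : ℕ → EuclideanSpace ℝ (Fin m) := fun k => if k < k₀ then u k else 0 with hv
  have hy1 : y 1 = x₁ := by
    simp only [hy]
    rcases lt_or_ge 1 k₀ with h | h
    · simp [h, hinit]
    · have : k₀ = 1 := le_antisymm h hk₀1
      simp [this, ← hinit, this ▸ hx0]
  have hvU : ∀ k, 1 ≤ k → k ≤ Γ - 1 → v k ∈ U := by
    intro k h1 h2
    simp only [hv]
    split
    · exact hu k h1 h2
    · exact hU0
  have hydyn : ∀ k, 1 ≤ k → y (k + 1) = f (y k, v k) := by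
    intro k h1
    simp only [hy, hv]
    rcases lt_or_ge (k + 1) k₀ with h | h
    · have hk : k < k₀ := Nat.lt_of_succ_lt h
      simp [h, hk, hdyn k h1]
    · rcases lt_or_ge k k₀ with hk | hk
      · have hkeq : k + 1 = k₀ := le_antisymm (Nat.succ_le_of_lt hk) h
        simp only [Nat.not_lt.mpr h, if_neg, if_pos hk, ite_false]
        rw [← hdyn k h1, hkeq, hx0]
      · have h2 : ¬ k < k₀ := Nat.not_lt.mpr hk
        simp only [Nat.not_lt.mpr h, if_neg, h2, ite_false]
        exact hf.symm
  have hineq := hopt y v hy1 hvU hydyn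
  have hsplitx : ∑ k ∈ Finset.Ico 1 k₀, ω k * ‖x k‖ + ∑ k ∈ Finset.Ico k₀ (Γ + 1), ω k * ‖x k‖
      = ∑ k ∈ Finset.Ico 1 (Γ + 1), ω k * ‖x k‖ :=
    Finset.sum_Ico_consecutive _ hk₀1 (Nat.le_succ_of_le hk₀Γ)
  have hsplity : ∑ k ∈ Finset.Ico 1 k₀, ω k * ‖y k‖ + ∑ k ∈ Finset.Ico k₀ (Γ + 1), ω k * ‖y k‖
      = ∑ k ∈ Finset.Ico 1 (Γ + 1), ω k * ‖y k‖ :=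
    Finset.sum_Ico_consecutive _ hk₀1 (Nat.le_succ_of_le hk₀Γ)
  have hyx : ∑ k ∈ Finset.Ico 1 k₀, ω k * ‖y k‖ = ∑ k ∈ Finset.Ico 1 k₀, ω k * ‖x k‖ := by
    apply Finset.sum_congr rfl
    intro k hk
    have := (Finset.mem_Ico.mp hk).2
    simp [hy, this]
  have hytail : ∑ k ∈ Finset.Ico k₀ (Γ + 1), ω k * ‖y k‖ = 0 := by
    apply Finset.sum_eq_zero
    intro k hk
    have := (Finset.mem_Ico.mp hk).1
    simp [hy, Nat.not_lt.mpr this]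
  rw [← Finset.Ico_add_one_right_eq_Icc] at hineq ⊢
  rw [← hsplitx, ← hsplity, hyx, hytail, add_zero] at hineq
  have hle : ∑ k ∈ Finset.Ico k₀ (Γ + 1), ω k * ‖x k‖ ≤ 0 := by linarith
  have hge : 0 ≤ ∑ k ∈ Finset.Ico k₀ (Γ + 1), ω k * ‖x k‖ :=
    Finset.sum_nonneg fun k _ => mul_nonneg (hω k).le (norm_nonneg _)
  linarith
end

section
/- Consider m independent trajectories (particle scenarios) each governed by x^i(k+1) = f(x^i(k), u^i(k)) with f(0,0) = 0, controls u^i(k) ∈ U with 0 ∈ U, initial states x^i(1) = x^i₁, and consensus constraint u^i(k) = ū(k) for 1 ≤ k ≤ T_c - 1 (same ū for all i). Suppose the collection (x^{i,**}, u^{i,**}) minimizes the averaged cost (1/m) Σ_{i=1}^{m} Σ_{k=1}^{Γ} ω(k)‖x^i(k)‖₂ with ω(k) > 0, and that for some scenario i' we have T_c ≤ k₀^{i'} and x^{i'}(k₀^{i'})** = 0. Then x^{i'}(k)** = 0 for all k₀^{i'} ≤ k ≤ Γ. -/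
/- Particle MPC with consensus horizon: if the family `(x^{i,**}, u^{i,**})`
minimizes the averaged sum-of-norm cost `(1/m) ∑_i ∑_{k=1}^{Γ} ω(k)‖x^i(k)‖₂`
subject to dynamics, initial conditions, control constraints and the consensus
constraint `u^i(k) = ū(k)` for `1 ≤ k ≤ T_c - 1`, and scenario `i'` satisfies
`x^{i'}(k₀) = 0` with `T_c ≤ k₀ ≤ Γ`, then `x^{i'}(k) = 0` for all `k₀ ≤ k ≤ Γ`. -/
theorem particle_sum_of_norm_optimal_stays_at_zero {n p : ℕ} (m Γ Tc : ℕ)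
    (f : EuclideanSpace ℝ (Fin n) × EuclideanSpace ℝ (Fin p) → EuclideanSpace ℝ (Fin n))
    (hf : f (0, 0) = 0)
    (U : Set (EuclideanSpace ℝ (Fin p))) (hU0 : (0 : EuclideanSpace ℝ (Fin p)) ∈ U)
    (ω : ℕ → ℝ) (hω : ∀ k, 0 < ω k)
    (x₁ : Fin m → EuclideanSpace ℝ (Fin n))
    (x : Fin m → ℕ → EuclideanSpace ℝ (Fin n))
    (u : Fin m → ℕ → EuclideanSpace ℝ (Fin p))
    (ubar : ℕ → EuclideanSpace ℝ (Fin p))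
    (hinit : ∀ i, x i 1 = x₁ i)
    (hu : ∀ i k, 1 ≤ k → k ≤ Γ - 1 → u i k ∈ U)
    (hcons : ∀ i k, 1 ≤ k → k ≤ Tc - 1 → u i k = ubar k)
    (hdyn : ∀ i k, 1 ≤ k → x i (k + 1) = f (x i k, u i k))
    (hopt : ∀ (y : Fin m → ℕ → EuclideanSpace ℝ (Fin n))
      (v : Fin m → ℕ → EuclideanSpace ℝ (Fin p)) (vbar : ℕ → EuclideanSpace ℝ (Fin p)),
      (∀ i, y i 1 = x₁ i) →
      (∀ i k, 1 ≤ k → k ≤ Γ - 1 → v i k ∈ U) →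
      (∀ i k, 1 ≤ k → k ≤ Tc - 1 → v i k = vbar k) →
      (∀ i k, 1 ≤ k → y i (k + 1) = f (y i k, v i k)) →
      (1 / (m : ℝ)) * ∑ i, ∑ k ∈ Finset.Icc 1 Γ, ω k * ‖x i k‖ ≤
        (1 / (m : ℝ)) * ∑ i, ∑ k ∈ Finset.Icc 1 Γ, ω k * ‖y i k‖)
    (i' : Fin m) (k₀ : ℕ) (hk₀Tc : Tc ≤ k₀) (hk₀1 : 1 ≤ k₀) (hk₀Γ : k₀ ≤ Γ)
    (hx0 : x i' k₀ = 0) :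
    ∀ k, k₀ ≤ k → k ≤ Γ → x i' k = 0 := by
  classical
  intro k hk₀k hkΓ
  by_contra hne
  have hm : (0:ℝ) < 1 / m := by
    have : 0 < m := i'.pos
    positivity
  set y : Fin m → ℕ → EuclideanSpace ℝ (Fin n) :=
    fun i j => if i = i' ∧ k₀ ≤ j then 0 else x i j with hy
  set v : Fin m → ℕ → EuclideanSpace ℝ (Fin p) :=
    fun i j => if i = i' ∧ k₀ ≤ j then 0 else u i j with hv
  have key := hopt y v ubar
    (by
      intro i
      show (if i = i' ∧ k₀ ≤ 1 then 0 else x i 1) = x₁ i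
      by_cases h : i = i' ∧ k₀ ≤ 1
      · have hk1 : k₀ = 1 := le_antisymm h.2 hk₀1
        rw [if_pos h, h.1, ← hinit i']
        rw [hk1] at hx0
        exact hx0.symm
      · rw [if_neg h]; exact hinit i)
    (by
      intro i j h1 h2
      show (if i = i' ∧ k₀ ≤ j then 0 else u i j) ∈ U
      by_cases h : i = i' ∧ k₀ ≤ j
      · rw [if_pos h]; exact hU0
      · rw [if_neg h]; exact hu i j h1 h2)
    (by
      intro i j h1 h2
      have hjk : ¬ (k₀ ≤ j) := by omega
      show (if i = i' ∧ k₀ ≤ j then 0 else u i j) = ubar j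
      rw [if_neg (fun h => hjk h.2)]
      exact hcons i j h1 h2)
    (by
      intro i j h1
      show (if i = i' ∧ k₀ ≤ j + 1 then 0 else x i (j+1)) =
        f (if i = i' ∧ k₀ ≤ j then 0 else x i j, if i = i' ∧ k₀ ≤ j then 0 else u i j)
      by_cases hi : i = i'
      · by_cases hj : k₀ ≤ j
        · have hj1 : k₀ ≤ j + 1 := le_trans hj (Nat.le_succ j)
          rw [if_pos ⟨hi, hj1⟩, if_pos ⟨hi, hj⟩, if_pos ⟨hi, hj⟩]
          exact hf.symm
        · by_cases hj1 : k₀ ≤ j + 1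
          · have hjk : j + 1 = k₀ := by omega
            rw [if_pos ⟨hi, hj1⟩, if_neg (fun h => hj h.2), if_neg (fun h => hj h.2), hi,
              ← hdyn i' j h1, hjk, hx0]
          · rw [if_neg (fun h => hj1 h.2), if_neg (fun h => hj h.2),
              if_neg (fun h => hj h.2)]
            exact hdyn i j h1
      · rw [if_neg (fun h => hi h.1), if_neg (fun h => hi h.1), if_neg (fun h => hi h.1)]
        exact hdyn i j h1)
  have hmem : (i', k) ∈ Finset.univ ×ˢ Finset.Icc 1 Γ := by
    simp [Finset.mem_Icc]; omega
  have hlt : ∑ q ∈ Finset.univ ×ˢ Finset.Icc 1 Γ, ω q.2 * ‖y q.1 q.2‖ <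
      ∑ q ∈ Finset.univ ×ˢ Finset.Icc 1 Γ, ω q.2 * ‖x q.1 q.2‖ := by
    refine Finset.sum_lt_sum ?_ ⟨(i', k), hmem, ?_⟩
    · intro q _
      show ω q.2 * ‖if q.1 = i' ∧ k₀ ≤ q.2 then 0 else x q.1 q.2‖ ≤ ω q.2 * ‖x q.1 q.2‖
      by_cases h : q.1 = i' ∧ k₀ ≤ q.2
      · rw [if_pos h, norm_zero, mul_zero]
        exact mul_nonneg (hω q.2).le (norm_nonneg _)
      · rw [if_neg h]
    · show ω k * ‖if i' = i' ∧ k₀ ≤ k then 0 else x i' k‖ < ω k * ‖x i' k‖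
      rw [if_pos ⟨rfl, hk₀k⟩, norm_zero, mul_zero]
      exact mul_pos (hω k) (norm_pos_iff.mpr hne)
  rw [Finset.sum_product, Finset.sum_product] at hlt
  have := mul_lt_mul_of_pos_left hlt hm
  linarith
end

section
/- In the particle MPC problem with consensus horizon T_c, if (x^{i,**}, u^{i,**})_{i=1}^m minimizes the averaged sum-of-norm cost and scenario i' reaches zero at time k₀ ≥ T_c, then replacing only scenario i''s control by zero after k₀ (keeping all other scenarios' controls unchanged) yields a feasible family whose cost does not exceed the optimal cost; consequently the inequality (1/m) Σ_{k=k₀+1}^{Γ} ω(k)‖x^{i'}(k)**‖₂ ≤ 0 holds. -/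
/- Particle MPC: if the optimal family's scenario `i'` reaches zero at `k₀ ≥ T_c`,
then zeroing only scenario `i'`'s control from `k₀` on yields a feasible family
whose averaged cost does not exceed the optimal averaged cost; consequently
`(1/m) ∑_{k=k₀+1}^{Γ} ω(k)‖x^{i'}(k)‖₂ ≤ 0`. -/
theorem particle_modified_family_feasible_cost_le {n p : ℕ} (m Γ Tc : ℕ)
    (f : EuclideanSpace ℝ (Fin n) × EuclideanSpace ℝ (Fin p) → EuclideanSpace ℝ (Fin n))
    (hf : f (0, 0) = 0)
    (U : Set (EuclideanSpace ℝ (Fin p))) (hU0 : (0 : EuclideanSpace ℝ (Fin p)) ∈ U)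
    (ω : ℕ → ℝ) (hω : ∀ k, 0 < ω k)
    (x₁ : Fin m → EuclideanSpace ℝ (Fin n))
    (x : Fin m → ℕ → EuclideanSpace ℝ (Fin n))
    (u : Fin m → ℕ → EuclideanSpace ℝ (Fin p))
    (ubar : ℕ → EuclideanSpace ℝ (Fin p))
    (hinit : ∀ i, x i 1 = x₁ i)
    (hu : ∀ i k, 1 ≤ k → k ≤ Γ - 1 → u i k ∈ U)
    (hcons : ∀ i k, 1 ≤ k → k ≤ Tc - 1 → u i k = ubar k)
    (hdyn : ∀ i k, 1 ≤ k → x i (k + 1) = f (x i k, u i k))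
    (hopt : ∀ (y : Fin m → ℕ → EuclideanSpace ℝ (Fin n))
      (v : Fin m → ℕ → EuclideanSpace ℝ (Fin p)) (vbar : ℕ → EuclideanSpace ℝ (Fin p)),
      (∀ i, y i 1 = x₁ i) →
      (∀ i k, 1 ≤ k → k ≤ Γ - 1 → v i k ∈ U) →
      (∀ i k, 1 ≤ k → k ≤ Tc - 1 → v i k = vbar k) →
      (∀ i k, 1 ≤ k → y i (k + 1) = f (y i k, v i k)) →
      (1 / (m : ℝ)) * ∑ i, ∑ k ∈ Finset.Icc 1 Γ, ω k * ‖x i k‖ ≤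
        (1 / (m : ℝ)) * ∑ i, ∑ k ∈ Finset.Icc 1 Γ, ω k * ‖y i k‖)
    (i' : Fin m) (k₀ : ℕ) (hk₀Tc : Tc ≤ k₀) (hk₀1 : 1 ≤ k₀) (hk₀Γ : k₀ ≤ Γ)
    (hx0 : x i' k₀ = 0)
    (u1 : Fin m → ℕ → EuclideanSpace ℝ (Fin p))
    (hu1 : ∀ i k, u1 i k = if i = i' ∧ k₀ ≤ k then 0 else u i k)
    (x1 : Fin m → ℕ → EuclideanSpace ℝ (Fin n))
    (hx1init : ∀ i, x1 i 1 = x₁ i)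
    (hx1dyn : ∀ i k, 1 ≤ k → x1 i (k + 1) = f (x1 i k, u1 i k)) :
    ((∀ i k, 1 ≤ k → k ≤ Γ - 1 → u1 i k ∈ U) ∧
      (∀ i k, 1 ≤ k → k ≤ Tc - 1 → u1 i k = ubar k) ∧
      (1 / (m : ℝ)) * ∑ i, ∑ k ∈ Finset.Icc 1 Γ, ω k * ‖x1 i k‖ ≤
        (1 / (m : ℝ)) * ∑ i, ∑ k ∈ Finset.Icc 1 Γ, ω k * ‖x i k‖) ∧
    (1 / (m : ℝ)) * ∑ k ∈ Finset.Icc (k₀ + 1) Γ, ω k * ‖x i' k‖ ≤ 0 := by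
  -- feasibility of controls
  have hu1U : ∀ i k, 1 ≤ k → k ≤ Γ - 1 → u1 i k ∈ U := by
    intro i k h1 h2
    rw [hu1]
    split
    · exact hU0
    · exact hu i k h1 h2
  have hu1cons : ∀ i k, 1 ≤ k → k ≤ Tc - 1 → u1 i k = ubar k := by
    intro i k h1 h2
    have hk : ¬ (k₀ ≤ k) := by omega
    rw [hu1]
    rw [if_neg (by tauto)]
    exact hcons i k h1 h2
  -- trajectories of other scenarios unchanged
  have hothers : ∀ i, i ≠ i' → ∀ k, 1 ≤ k → x1 i k = x i k := by
    intro i hi k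
    induction k with
    | zero => intro h; omega
    | succ k ih =>
      intro _
      rcases Nat.eq_zero_or_pos k with h | h
      · subst h; rw [hx1init, hinit]
      · have hk1 : 1 ≤ k := h
        rw [hx1dyn i k hk1, hdyn i k hk1, ih hk1, hu1, if_neg (by tauto)]
  -- scenario i' unchanged up to k₀
  have hsame : ∀ k, 1 ≤ k → k ≤ k₀ → x1 i' k = x i' k := by
    intro k
    induction k with
    | zero => intro h; omega
    | succ k ih =>
      intro _ hle
      rcases Nat.eq_zero_or_pos k with h | h
      · subst h; rw [hx1init, hinit]
      · have hk1 : 1 ≤ k := h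
        have : ¬ (k₀ ≤ k) := by omega
        rw [hx1dyn i' k hk1, hdyn i' k hk1, ih hk1 (by omega), hu1,
          if_neg (by tauto)]
  -- scenario i' is zero from k₀ on
  have hzero : ∀ k, k₀ ≤ k → x1 i' k = 0 := by
    intro k hk
    induction k, hk using Nat.le_induction with
    | base => rw [hsame k₀ hk₀1 le_rfl, hx0]
    | succ k hk ih =>
      have hk1 : 1 ≤ k := le_trans hk₀1 hk
      rw [hx1dyn i' k hk1, ih, hu1, if_pos ⟨rfl, hk⟩, hf]
  -- split the inner sums
  have hsplit : Finset.Icc 1 Γ = Finset.Icc 1 k₀ ∪ Finset.Icc (k₀ + 1) Γ := by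
    ext a
    simp only [Finset.mem_Icc, Finset.mem_union]
    omega
  have hdisj : Disjoint (Finset.Icc 1 k₀) (Finset.Icc (k₀ + 1) Γ) := by
    rw [Finset.disjoint_left]
    intro a ha hb
    simp only [Finset.mem_Icc] at ha hb
    omega
  have hsum : ∀ i, ∑ k ∈ Finset.Icc 1 Γ, ω k * ‖x i k‖ =
      ∑ k ∈ Finset.Icc 1 Γ, ω k * ‖x1 i k‖ +
      (if i = i' then ∑ k ∈ Finset.Icc (k₀ + 1) Γ, ω k * ‖x i k‖ else 0) := by
    intro i
    by_cases hi : i = i'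
    · subst hi
      rw [if_pos rfl, hsplit, Finset.sum_union hdisj, Finset.sum_union hdisj]
      have h1 : ∑ k ∈ Finset.Icc 1 k₀, ω k * ‖x1 i k‖
          = ∑ k ∈ Finset.Icc 1 k₀, ω k * ‖x i k‖ := by
        apply Finset.sum_congr rfl
        intro k hk
        simp only [Finset.mem_Icc] at hk
        rw [hsame k hk.1 hk.2]
      have h2 : ∑ k ∈ Finset.Icc (k₀ + 1) Γ, ω k * ‖x1 i k‖ = 0 := by
        apply Finset.sum_eq_zero
        intro k hk
        simp only [Finset.mem_Icc] at hk
        rw [hzero k (by omega)]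
        simp
      rw [h1, h2]
      ring
    · rw [if_neg hi, add_zero]
      apply Finset.sum_congr rfl
      intro k hk
      simp only [Finset.mem_Icc] at hk
      rw [hothers i hi k hk.1]
  have hAB : ∑ i, ∑ k ∈ Finset.Icc 1 Γ, ω k * ‖x i k‖ =
      (∑ i, ∑ k ∈ Finset.Icc 1 Γ, ω k * ‖x1 i k‖) +
      ∑ k ∈ Finset.Icc (k₀ + 1) Γ, ω k * ‖x i' k‖ := by
    rw [Finset.sum_congr rfl fun i _ => hsum i, Finset.sum_add_distrib]
    congr 1
    simp
  have htail_nonneg : 0 ≤ ∑ k ∈ Finset.Icc (k₀ + 1) Γ, ω k * ‖x i' k‖ := by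
    apply Finset.sum_nonneg
    intro k _
    exact mul_nonneg (hω k).le (norm_nonneg _)
  have hm : (0 : ℝ) ≤ 1 / (m : ℝ) := by positivity
  have hoptle := hopt x1 u1 ubar hx1init hu1U hu1cons hx1dyn
  refine ⟨⟨hu1U, hu1cons, ?_⟩, ?_⟩
  · rw [hAB]
    nlinarith [htail_nonneg, hm]
  · rw [hAB] at hoptle
    nlinarith [hoptle]
end
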